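/- arXiv:1608.04995 — 4 statements merged into one kernel-verified Lean document; each statement's English description precedes it below -/
import Mathlib

section
/- Let s be a homeomorphism of a compact metric space X with a continuous bounded linear cocycle A, let μ be an s-invariant measure, and let t be a homeomorphism commuting with s. If μ' is a weak-* limit of the Cesàro averages (1/m)∑_{j=0}^{m-1} (t^j)_*μ, then μ' is s-invariant and λ₊(s, μ', A) ≥ λ₊(s, μ, A). -/
open MeasureTheory Filter Set Topology
open scoped ENNReal

/-!
Write `F_n x = log ‖A(s^n, x)‖`. Because `t^j` commutes with `s`, the cocycle identity bounds
`F_n x ≤ F_n (t^j x) + C_j` with `C_j` independent of `n`, and `n ↦ ∫ F_n d((t^j)_* μ)` is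
subadditive since `(t^j)_* μ` is again `s`-invariant; a Fekete-type argument then gives
`λ₊(s, μ) ≤ λ₊(s, (t^j)_* μ)`. The bound survives Cesàro averaging because each `ν ↦ ∫ F_n dν`
is affine, and it passes to the weak-* limit because `λ₊` is an infimum of weak-* continuous
functions, hence upper semicontinuous. Invariance of `μ'` holds since `s_*` is weak-* continuous.
-/

theorem Subadditive.ciInf_le_of_le_add {a b : ℕ → ℝ} (hb : Subadditive b) {C : ℝ}
    (hab : ∀ n, a n ≤ b n + C) (ha : BddBelow (range fun n : ℕ => (1 / (n + 1 : ℝ)) * a (n + 1)))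
    (n : ℕ) : ⨅ k : ℕ, (1 / (k + 1 : ℝ)) * a (k + 1) ≤ (1 / (n + 1 : ℝ)) * b (n + 1) := by
  have hbound : ∀ k : ℕ, ⨅ k : ℕ, (1 / (k + 1 : ℝ)) * a (k + 1) ≤
      (1 / (n + 1 : ℝ)) * b (n + 1) + C / ((k + 1) * (n + 1)) := by
    intro k
    have hinf := ciInf_le ha (k * (n + 1) + n)
    have hcast : ((k * (n + 1) + n : ℕ) : ℝ) + 1 = (k + 1) * (n + 1) := by push_cast; ring
    have hmul : a (k * (n + 1) + n + 1) ≤ k * b (n + 1) + b (n + 1) + C :=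
      (hab _).trans (add_le_add_left (hb.apply_mul_add_le k (n + 1) (n + 1)) C)
    rw [hcast] at hinf
    calc _ ≤ 1 / ((k + 1) * (n + 1)) * a (k * (n + 1) + n + 1) := hinf
      _ ≤ 1 / ((k + 1) * (n + 1)) * (k * b (n + 1) + b (n + 1) + C) := by gcongr
      _ = _ := by field_simp
  have hlim : Tendsto (fun k : ℕ => (1 / (n + 1 : ℝ)) * b (n + 1) + C / ((k + 1) * (n + 1)))
      atTop (𝓝 ((1 / (n + 1 : ℝ)) * b (n + 1) + 0)) :=
    tendsto_const_nhds.add <| tendsto_const_nhds.div_atTop <|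
      (tendsto_natCast_atTop_atTop.atTop_add tendsto_const_nhds).atTop_mul_const (by positivity)
  simpa using ge_of_tendsto' hlim hbound

theorem UpperSemicontinuous.le_of_tendsto {α γ ι : Type*} [TopologicalSpace α] [LinearOrder γ]
    {f : α → γ} (hf : UpperSemicontinuous f) {l : Filter ι} [l.NeBot] {u : ι → α} {x : α}
    (hu : Tendsto u l (𝓝 x)) {c : γ} (hc : ∀ᶠ i in l, c ≤ f (u i)) : c ≤ f x := by
  by_contra! h
  obtain ⟨i, hci, hic⟩ := (hc.and (hu.eventually (hf x c h))).exists
  exact (hci.trans_lt hic).false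

theorem MeasureTheory.ProbabilityMeasure.map_eq_of_tendsto {Ω ι : Type*} [TopologicalSpace Ω]
    [MeasurableSpace Ω] [BorelSpace Ω] [HasOuterApproxClosed Ω] {l : Filter ι} [l.NeBot]
    {f : Ω → Ω} (hf : Continuous f) {ν : ι → ProbabilityMeasure Ω} {μ : ProbabilityMeasure Ω}
    (hlim : Tendsto ν l (𝓝 μ)) (hν : ∀ i, (ν i : Measure Ω).map f = ν i) :
    (μ : Measure Ω).map f = μ := by
  have hmap : (fun i => (ν i).map hf.measurable.aemeasurable) = ν :=
    funext fun i => toMeasure_injective (by rw [toMeasure_map]; exact hν i)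
  have h := tendsto_map_of_tendsto_of_continuous ν μ hlim hf
  rw [hmap] at h
  rw [← toMeasure_map μ hf.measurable.aemeasurable, tendsto_nhds_unique h hlim]

theorem MeasureTheory.Measure.map_smul_sum_of_map_eq {X ι : Type*} [MeasurableSpace X]
    {f : X → X} (hf : Measurable f) (c : ℝ≥0∞) (S : Finset ι) (ρ : ι → Measure X)
    (h : ∀ j ∈ S, (ρ j).map f = ρ j) : (c • ∑ j ∈ S, ρ j).map f = c • ∑ j ∈ S, ρ j := by
  rw [Measure.map_smul, Measure.map_finset_sum hf.aemeasurable, Finset.sum_congr rfl h]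

theorem MeasureTheory.Measure.map_smul_map_smul_eq {G X : Type*} [Group G] [MulAction G X]
    [MeasurableSpace X] [MeasurableConstSMul G X] {s g : G} {ρ : Measure X}
    (hρ : ρ.map (s • ·) = ρ) (hsg : Commute s g) :
    (ρ.map (g • ·)).map (s • ·) = ρ.map (g • ·) := by
  have hcomp : ((s • ·) ∘ (g • ·) : X → X) = (g • ·) ∘ (s • ·) := by
    funext x; simp [smul_smul, hsg.eq]
  rw [Measure.map_map (measurable_const_smul s) (measurable_const_smul g), hcomp,
    ← Measure.map_map (measurable_const_smul g) (measurable_const_smul s), hρ]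

section Cocycle

variable {G X 𝕜 E : Type*} [NontriviallyNormedField 𝕜] [NormedAddCommGroup E] [NormedSpace 𝕜 E]

structure IsLinearCocycle [Group G] [MulAction G X] (A : G → X → E ≃L[𝕜] E) : Prop where
  coe_mul (g h : G) (x : X) :
    (A (g * h) x : E →L[𝕜] E) = (A g (h • x) : E →L[𝕜] E).comp (A h x : E →L[𝕜] E)

noncomputable def cocycleLogNorm (A : G → X → E ≃L[𝕜] E) (g : G) (x : X) : ℝ :=
  Real.log ‖(A g x : E →L[𝕜] E)‖

noncomputable def topLyapunov [Monoid G] [MeasurableSpace X] (A : G → X → E ≃L[𝕜] E) (s : G)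
    (ρ : Measure X) : ℝ :=
  ⨅ n : ℕ, (1 / (n + 1 : ℝ)) * ∫ x, cocycleLogNorm A (s ^ (n + 1)) x ∂ρ

theorem topLyapunov_of_subsingleton [Monoid G] [MeasurableSpace X] [Subsingleton E]
    (A : G → X → E ≃L[𝕜] E) (s : G) (ρ : Measure X) : topLyapunov A s ρ = 0 := by
  simp [topLyapunov, cocycleLogNorm, Subsingleton.elim _ (0 : E →L[𝕜] E)]

section Continuity

variable [TopologicalSpace X] [Nontrivial E] {A : G → X → E ≃L[𝕜] E} {g : G}
  (hAc : Continuous fun x => (A g x : E →L[𝕜] E))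
include hAc

theorem continuous_cocycleLogNorm : Continuous (cocycleLogNorm A g) :=
  hAc.norm.log fun x => (A g x).norm_pos.ne'

theorem exists_forall_cocycleLogNorm_le [CompactSpace X] : ∃ c, ∀ x, cocycleLogNorm A g x ≤ c :=
  let ⟨c, hc⟩ := (isCompact_range (continuous_cocycleLogNorm hAc)).bddAbove
  ⟨c, fun x => hc (mem_range_self x)⟩

theorem integrable_cocycleLogNorm [CompactSpace X] [MeasurableSpace X] [OpensMeasurableSpace X]
    (ρ : Measure X) [IsFiniteMeasure ρ] : Integrable (cocycleLogNorm A g) ρ :=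
  (continuous_cocycleLogNorm hAc).integrable_of_hasCompactSupport (.of_compactSpace _)

theorem integrable_cocycleLogNorm_comp [CompactSpace X] [MeasurableSpace X]
    [OpensMeasurableSpace X] {f : X → X} (hf : Continuous f) (ρ : Measure X) [IsFiniteMeasure ρ] :
    Integrable (fun x => cocycleLogNorm A g (f x)) ρ :=
  ((continuous_cocycleLogNorm hAc).comp hf).integrable_of_hasCompactSupport (.of_compactSpace _)

end Continuity

variable [Group G] [MulAction G X]

namespace IsLinearCocycle

variable {A : G → X → E ≃L[𝕜] E} (hA : IsLinearCocycle A)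
include hA

theorem coe_one (x : X) : (A 1 x : E →L[𝕜] E) = ContinuousLinearMap.id 𝕜 E := by
  have h := hA.coe_mul 1 1 x
  rw [one_mul, one_smul] at h
  ext v
  exact (A 1 x).injective congr($h v).symm

variable [Nontrivial E]

theorem cocycleLogNorm_one (x : X) : cocycleLogNorm A 1 x = 0 := by
  rw [cocycleLogNorm, hA.coe_one, ContinuousLinearMap.norm_id, Real.log_one]

theorem cocycleLogNorm_mul_le (g h : G) (x : X) :
    cocycleLogNorm A (g * h) x ≤ cocycleLogNorm A g (h • x) + cocycleLogNorm A h x := by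
  rw [cocycleLogNorm, cocycleLogNorm, cocycleLogNorm,
    ← Real.log_mul (A g _).norm_pos.ne' (A h x).norm_pos.ne']
  refine Real.log_le_log (A (g * h) x).norm_pos ?_
  rw [hA.coe_mul g h x]
  exact ContinuousLinearMap.opNorm_comp_le _ _

theorem cocycleLogNorm_pow_le {g : G} {c : ℝ} (hc : ∀ x, cocycleLogNorm A g x ≤ c) (n : ℕ)
    (x : X) : cocycleLogNorm A (g ^ n) x ≤ n * c := by
  induction n generalizing x with
  | zero => simp [hA.cocycleLogNorm_one]
  | succ n ih =>
    calc cocycleLogNorm A (g ^ (n + 1)) x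
        ≤ cocycleLogNorm A (g ^ n) (g • x) + cocycleLogNorm A g x := by
          rw [pow_succ]; exact hA.cocycleLogNorm_mul_le _ _ _
      _ ≤ n * c + c := add_le_add (ih _) (hc x)
      _ = (n + 1 : ℕ) * c := by push_cast; ring

theorem neg_mul_le_cocycleLogNorm_pow {g : G} {c : ℝ} (hc : ∀ x, cocycleLogNorm A g⁻¹ x ≤ c)
    (n : ℕ) (x : X) : -(n * c) ≤ cocycleLogNorm A (g ^ n) x := by
  have hmul := hA.cocycleLogNorm_mul_le (g⁻¹ ^ n) (g ^ n) x
  rw [inv_pow, inv_mul_cancel, hA.cocycleLogNorm_one, ← inv_pow] at hmul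
  linarith [hA.cocycleLogNorm_pow_le hc n (g ^ n • x)]

/-- From the factorization `A(h, x) = A(g⁻¹, hg x) A(h, g x) A(g, x)`. -/
theorem cocycleLogNorm_le_cocycleLogNorm_smul_add {g h : G} (hgh : Commute g h) {c₁ c₂ : ℝ}
    (hc₁ : ∀ x, cocycleLogNorm A g⁻¹ x ≤ c₁) (hc₂ : ∀ x, cocycleLogNorm A g x ≤ c₂) (x : X) :
    cocycleLogNorm A h x ≤ cocycleLogNorm A h (g • x) + (c₁ + c₂) := by
  have hconj : g⁻¹ * (h * g) = h := by rw [← hgh.eq, inv_mul_cancel_left]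
  have h₁ := hA.cocycleLogNorm_mul_le g⁻¹ (h * g) x
  have h₂ := hA.cocycleLogNorm_mul_le h g x
  rw [hconj] at h₁
  linarith [hc₁ ((h * g) • x), hc₂ x]

end IsLinearCocycle

section Measure

variable [TopologicalSpace X] [CompactSpace X] [MeasurableSpace X] [BorelSpace X] [Nontrivial E]
  {A : G → X → E ≃L[𝕜] E} (hA : IsLinearCocycle A)
  (hAc : ∀ g, Continuous fun x => (A g x : E →L[𝕜] E))
include hA hAc

theorem bddBelow_topLyapunov_seq (s : G) (ρ : Measure X) [IsFiniteMeasure ρ] :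
    BddBelow (range fun n : ℕ => (1 / (n + 1 : ℝ)) * ∫ x, cocycleLogNorm A (s ^ (n + 1)) x ∂ρ) := by
  obtain ⟨c, hc⟩ := exists_forall_cocycleLogNorm_le (hAc s⁻¹)
  refine ⟨-(ρ.real univ * c), ?_⟩
  rintro _ ⟨n, rfl⟩
  have hint : ∫ _, -((n + 1 : ℕ) * c) ∂ρ ≤ ∫ x, cocycleLogNorm A (s ^ (n + 1)) x ∂ρ :=
    integral_mono (integrable_const _) (integrable_cocycleLogNorm (hAc _) ρ)
      (hA.neg_mul_le_cocycleLogNorm_pow hc (n + 1))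
  rw [integral_const, smul_eq_mul] at hint
  calc -(ρ.real univ * c) = 1 / (n + 1 : ℝ) * (ρ.real univ * -((n + 1 : ℕ) * c)) := by
        push_cast; field_simp
    _ ≤ _ := mul_le_mul_of_nonneg_left hint (by positivity)

theorem le_topLyapunov_smul_sum {s : G} {ι : Type*} {S : Finset ι} (hS : S.Nonempty)
    (ρ : ι → Measure X) [∀ j, IsFiniteMeasure (ρ j)] {c : ℝ}
    (hc : ∀ j ∈ S, c ≤ topLyapunov A s (ρ j)) :
    c ≤ topLyapunov A s ((S.card : ℝ≥0∞)⁻¹ • ∑ j ∈ S, ρ j) := by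
  refine le_ciInf fun n => ?_
  have hcn : ∀ j ∈ S, c ≤ 1 / (n + 1 : ℝ) * ∫ x, cocycleLogNorm A (s ^ (n + 1)) x ∂ρ j :=
    fun j hj => (hc j hj).trans (ciInf_le (bddBelow_topLyapunov_seq hA hAc s (ρ j)) n)
  rw [integral_smul_measure,
    integral_finsetSum_measure fun j _ => integrable_cocycleLogNorm (hAc _) (ρ j),
    ENNReal.toReal_inv, ENNReal.toReal_natCast, smul_eq_mul]
  calc c = (S.card : ℝ)⁻¹ * ∑ _j ∈ S, c := by
        rw [Finset.sum_const, nsmul_eq_mul,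
          inv_mul_cancel_left₀ (Nat.cast_ne_zero.mpr hS.card_pos.ne')]
    _ ≤ (S.card : ℝ)⁻¹ * ∑ j ∈ S, 1 / (n + 1 : ℝ) * ∫ x, cocycleLogNorm A (s ^ (n + 1)) x ∂ρ j := by
        gcongr with j hj
        exact hcn j hj
    _ = _ := by rw [← Finset.mul_sum]; ring

theorem upperSemicontinuous_topLyapunov (s : G) :
    UpperSemicontinuous fun ρ : ProbabilityMeasure X => topLyapunov A s ρ :=
  upperSemicontinuous_ciInf (fun ρ => bddBelow_topLyapunov_seq hA hAc s ρ) fun _ =>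
    (continuous_const.mul (ProbabilityMeasure.continuous_integral_continuousMap
      (⟨_, continuous_cocycleLogNorm (hAc _)⟩ : C(X, ℝ)))).upperSemicontinuous

variable [ContinuousConstSMul G X]

theorem subadditive_integral_cocycleLogNorm {s : G} {ρ : Measure X} [IsFiniteMeasure ρ]
    (hρ : ρ.map (s • ·) = ρ) : Subadditive fun n => ∫ x, cocycleLogNorm A (s ^ n) x ∂ρ := by
  intro m n
  have hpow : ρ.map (s ^ n • ·) = ρ := by
    rw [← smul_iterate]
    exact (MeasurePreserving.iterate ⟨measurable_const_smul s, hρ⟩ n).map_eq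
  have hcomp : ∫ x, cocycleLogNorm A (s ^ m) (s ^ n • x) ∂ρ =
      ∫ x, cocycleLogNorm A (s ^ m) x ∂ρ := by
    conv_rhs => rw [← hpow]
    exact (integral_map (measurable_const_smul _).aemeasurable
      (continuous_cocycleLogNorm (hAc _)).aestronglyMeasurable).symm
  have hint := integrable_cocycleLogNorm_comp (hAc (s ^ m)) (continuous_const_smul (s ^ n)) ρ
  beta_reduce
  rw [← hcomp, ← integral_add hint (integrable_cocycleLogNorm (hAc _) ρ)]
  refine integral_mono (integrable_cocycleLogNorm (hAc _) ρ)
    (hint.add (integrable_cocycleLogNorm (hAc _) ρ)) fun x => ?_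
  simpa only [pow_add] using hA.cocycleLogNorm_mul_le (s ^ m) (s ^ n) x

theorem integral_cocycleLogNorm_le_map_add {s g : G} (hsg : Commute g s) (ρ : Measure X)
    [IsFiniteMeasure ρ] : ∃ C, ∀ n, ∫ x, cocycleLogNorm A (s ^ n) x ∂ρ ≤
      ∫ x, cocycleLogNorm A (s ^ n) x ∂(ρ.map (g • ·)) + C := by
  obtain ⟨c₁, hc₁⟩ := exists_forall_cocycleLogNorm_le (hAc g⁻¹)
  obtain ⟨c₂, hc₂⟩ := exists_forall_cocycleLogNorm_le (hAc g)
  refine ⟨ρ.real univ * (c₁ + c₂), fun n => ?_⟩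
  have hint := integrable_cocycleLogNorm_comp (hAc (s ^ n)) (continuous_const_smul g) ρ
  rw [integral_map (measurable_const_smul g).aemeasurable
      (continuous_cocycleLogNorm (hAc _)).aestronglyMeasurable,
    ← smul_eq_mul, ← integral_const, ← integral_add hint (integrable_const _)]
  exact integral_mono (integrable_cocycleLogNorm (hAc _) ρ) (hint.add (integrable_const _))
    fun x => hA.cocycleLogNorm_le_cocycleLogNorm_smul_add (hsg.pow_right n) hc₁ hc₂ x

theorem topLyapunov_le_map {s g : G} {ρ : Measure X} [IsFiniteMeasure ρ] (hρ : ρ.map (s • ·) = ρ)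
    (hsg : Commute g s) : topLyapunov A s ρ ≤ topLyapunov A s (ρ.map (g • ·)) := by
  obtain ⟨C, hC⟩ := integral_cocycleLogNorm_le_map_add hA hAc hsg ρ
  have hsub := subadditive_integral_cocycleLogNorm hA hAc
    (Measure.map_smul_map_smul_eq hρ hsg.symm)
  exact le_ciInf (hsub.ciInf_le_of_le_add hC (bddBelow_topLyapunov_seq hA hAc s ρ))

end Measure

end Cocycle

/-- If `μ'` is a weak-* limit of the Cesàro averages `(1/m) ∑_{j<m} (t^j)⋆μ` of an
`s`-invariant measure `μ`, where `s, t` are commuting homeomorphisms carrying a continuous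
bounded linear cocycle `A`, then `μ'` is `s`-invariant and
`λ₊(s, μ', A) ≥ λ₊(s, μ, A)`. -/
theorem stmt3 {X : Type*} [MetricSpace X] [CompactSpace X] [MeasurableSpace X] [BorelSpace X]
    {G : Type*} [CommGroup G] [MulAction G X]
    (hGcont : ∀ g : G, Continuous fun x : X => g • x)
    (d : ℕ) (A : G → X → ((Fin d → ℝ) ≃L[ℝ] (Fin d → ℝ)))
    (hAcont : ∀ g, Continuous fun x => (A g x : (Fin d → ℝ) →L[ℝ] (Fin d → ℝ)))
    (hcoc : ∀ (g h : G) (x : X),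
      (A (g * h) x : (Fin d → ℝ) →L[ℝ] (Fin d → ℝ)) =
        ((A g (h • x) : (Fin d → ℝ) →L[ℝ] (Fin d → ℝ))).comp
          (A h x : (Fin d → ℝ) →L[ℝ] (Fin d → ℝ)))
    (s t : G) (μ : Measure X) [IsProbabilityMeasure μ]
    (hμ : μ.map (fun x => s • x) = μ)
    (ν : ℕ → ProbabilityMeasure X)
    (hν : ∀ m : ℕ, (ν m : Measure X) =
      (((m + 1 : ℕ) : ENNReal))⁻¹ •
        ∑ j ∈ Finset.range (m + 1), μ.map (fun x => t ^ j • x))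
    (μ' : ProbabilityMeasure X)
    (hlim : Tendsto ν atTop (nhds μ')) :
    (μ' : Measure X).map (fun x => s • x) = (μ' : Measure X) ∧
      (⨅ n : ℕ, (1 / (n + 1 : ℝ)) *
          ∫ x, Real.log ‖(A (s ^ (n + 1)) x : (Fin d → ℝ) →L[ℝ] (Fin d → ℝ))‖ ∂μ) ≤
        ⨅ n : ℕ, (1 / (n + 1 : ℝ)) *
          ∫ x, Real.log ‖(A (s ^ (n + 1)) x : (Fin d → ℝ) →L[ℝ] (Fin d → ℝ))‖
            ∂(μ' : Measure X) := by
  have : ContinuousConstSMul G X := ⟨hGcont⟩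
  have hinv : ∀ m, (ν m : Measure X).map (s • ·) = ν m := fun m => by
    rw [hν m]
    exact Measure.map_smul_sum_of_map_eq (continuous_const_smul s).measurable _ _ _
      fun j _ => Measure.map_smul_map_smul_eq hμ (Commute.all s (t ^ j))
  refine ⟨ProbabilityMeasure.map_eq_of_tendsto (continuous_const_smul s) hlim hinv, ?_⟩
  change topLyapunov A s μ ≤ topLyapunov A s μ'
  rcases subsingleton_or_nontrivial (Fin d → ℝ) with _ | _
  · simp only [topLyapunov_of_subsingleton, le_refl]
  refine (upperSemicontinuous_topLyapunov ⟨hcoc⟩ hAcont s).le_of_tendsto hlim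
    (.of_forall fun m => ?_)
  have h := le_topLyapunov_smul_sum ⟨hcoc⟩ hAcont (Finset.nonempty_range_add_one (n := m))
    (fun j => μ.map (t ^ j • ·)) fun j _ => topLyapunov_le_map ⟨hcoc⟩ hAcont hμ (Commute.all _ _)
  rwa [Finset.card_range, ← hν m] at h
end

section
/- Let g be a real semisimple Lie algebra with Cartan involution θ, restricted root space decomposition g = m ⊕ a ⊕ ⊕_{β∈Σ} g^β, and let h ⊂ g be a Lie subalgebra containing m ⊕ a. If h ∩ g^β ≠ 0 for some restricted root β, then the Lie subalgebra generated by g^β is contained in h. -/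
open LieAlgebra

/-- The restricted root space of a real Lie algebra `L` relative to an abelian
subalgebra `a` and a linear functional `β` on `a`:
`{x ∈ L | ∀ h ∈ a, [h, x] = β(h) • x}`. -/
noncomputable def restrictedRootSpace {L : Type*} [LieRing L] [LieAlgebra ℝ L]
    (a : LieSubalgebra ℝ L) (β : Module.Dual ℝ a) : Submodule ℝ L :=
  ⨅ h : a, Module.End.eigenspace (LieAlgebra.ad ℝ L (h : L)) (β h)

/-! Pick `0 ≠ X ∈ h ∩ g^β`. By maximality of `a`, `H₀ = [θX, X]` lies in `a`, and the Cartan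
positivity of `-B(·, θ ·)` forces `β(H₀) ≠ 0`; so `θX, X, H₀` span a copy of `sl₂` in which a
nonzero `v ∈ g^β` with `[θX, v] = 0` would be a primitive vector of weight `-2`, which is
impossible. Since `B([X, [θX, v]], θv) = -B(u, θu)` for `u = [θX, v]`, the map
`v ↦ [X, [θX, v]]` is therefore injective, hence bijective, on `g^β`; its image lies in `h`
because `u ∈ g^0 = m ⊕ a ⊆ h`. -/

section Sl2

variable {K L M : Type*} [Field K] [CharZero K] [LieRing L] [LieAlgebra K L]
  [AddCommGroup M] [Module K M] [LieRingModule L M] [LieModule K L M]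

lemma isSl2Triple_of_lie_lie_eq_smul {e f : L} {t : K} (ht : t ≠ 0) (he : e ≠ 0)
    (hhe : ⁅⁅e, f⁆, e⁆ = -(t • e)) (hhf : ⁅⁅e, f⁆, f⁆ = t • f) :
    IsSl2Triple (-(2 / t) • ⁅e, f⁆) e (-(2 / t) • f) where
  h_ne_zero := by
    refine smul_ne_zero (by simpa using ht) fun h ↦ he ?_
    simpa [h, ht] using hhe
  lie_e_f := lie_smul _ _ _
  lie_h_e_nsmul := by
    rw [smul_lie, hhe]
    match_scalars
    field_simp
  lie_h_f_nsmul := by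
    rw [lie_smul, smul_lie, hhf]
    match_scalars
    field_simp

lemma eq_zero_of_lie_eq_smul_of_lie_eq_zero [FiniteDimensional K M] {e f : L} {t : K}
    (ht : t ≠ 0) (he : e ≠ 0)
    (hhe : ⁅⁅e, f⁆, e⁆ = -(t • e)) (hhf : ⁅⁅e, f⁆, f⁆ = t • f) {m : M}
    (hm : ⁅⁅e, f⁆, m⁆ = t • m) (hem : ⁅e, m⁆ = 0) : m = 0 := by
  by_contra hm0
  have hprim : (isSl2Triple_of_lie_lie_eq_smul ht he hhe hhf).HasPrimitiveVectorWith m (-2 : K) :=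
    ⟨hm0, by rw [smul_lie, hm, smul_smul, neg_mul, div_mul_cancel₀ _ ht], hem⟩
  obtain ⟨n, hn⟩ := hprim.exists_nat
  have : ((n + 2 : ℕ) : K) = 0 := by push_cast; rw [← hn]; ring
  exact absurd (Nat.cast_eq_zero.mp this) (by omega)

end Sl2

section RestrictedRootSpace

variable {L : Type*} [LieRing L] [LieAlgebra ℝ L] {a : LieSubalgebra ℝ L}

lemma mem_restrictedRootSpace_iff {β : Module.Dual ℝ a} {x : L} :
    x ∈ restrictedRootSpace a β ↔ ∀ H : a, ⁅(H : L), x⁆ = β H • x := by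
  simp [restrictedRootSpace, Submodule.mem_iInf]

lemma mem_restrictedRootSpace_zero_iff {x : L} :
    x ∈ restrictedRootSpace a 0 ↔ ∀ y ∈ a, ⁅y, x⁆ = 0 := by
  simp [mem_restrictedRootSpace_iff]

lemma lie_mem_restrictedRootSpace_add {β γ : Module.Dual ℝ a} {x y : L}
    (hx : x ∈ restrictedRootSpace a β) (hy : y ∈ restrictedRootSpace a γ) :
    ⁅x, y⁆ ∈ restrictedRootSpace a (β + γ) := by
  rw [mem_restrictedRootSpace_iff] at hx hy ⊢
  intro H
  rw [leibniz_lie, hx, hy, smul_lie, lie_smul, LinearMap.add_apply, add_smul, add_comm]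

lemma map_mem_restrictedRootSpace_neg (θ : L ≃ₗ⁅ℝ⁆ L) (ha_p : ∀ x ∈ a, θ x = -x)
    {β : Module.Dual ℝ a} {x : L} (hx : x ∈ restrictedRootSpace a β) :
    θ x ∈ restrictedRootSpace a (-β) := by
  rw [mem_restrictedRootSpace_iff] at hx ⊢
  intro H
  have hH : θ (-(H : L)) = H := by rw [map_neg, ha_p _ H.2, neg_neg]
  rw [← hH, ← θ.map_lie, neg_lie, hx, ← neg_smul, map_smul, LinearMap.neg_apply]

lemma killingForm_lie_of_mem_restrictedRootSpace [FiniteDimensional ℝ L]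
    {γ : Module.Dual ℝ a} {y : L} (hy : y ∈ restrictedRootSpace a γ) (H : a) (x : L) :
    killingForm ℝ L H ⁅y, x⁆ = γ H * killingForm ℝ L y x := by
  rw [← LieModule.traceForm_apply_lie_apply, (mem_restrictedRootSpace_iff.mp hy) H, map_smul,
    LinearMap.smul_apply, smul_eq_mul]

end RestrictedRootSpace

lemma killingForm_lie_lie_map_eq_neg {K L : Type*} [Field K] [LieRing L] [LieAlgebra K L]
    [FiniteDimensional K L] (θ : L ≃ₗ⁅K⁆ L) (hθinv : ∀ x, θ (θ x) = x) (X v : L) :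
    killingForm K L ⁅X, ⁅θ X, v⁆⁆ (θ v) = -killingForm K L ⁅θ X, v⁆ (θ ⁅θ X, v⁆) := by
  rw [θ.map_lie, hθinv, ← lie_skew, map_neg, LinearMap.neg_apply,
    LieModule.traceForm_apply_lie_apply]

section CartanInvolution

variable {L : Type*} [LieRing L] [LieAlgebra ℝ L] {a : LieSubalgebra ℝ L}

lemma mem_of_mem_restrictedRootSpace_zero_of_map_eq_neg (θ : L ≃ₗ⁅ℝ⁆ L)
    (ha_p : ∀ x ∈ a, θ x = -x) (ha_ab : IsLieAbelian a)
    (ha_max : ∀ a' : LieSubalgebra ℝ L,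
      (∀ x ∈ a', θ x = -x) → IsLieAbelian a' → a ≤ a' → a' = a)
    {z : L} (hz : z ∈ restrictedRootSpace a 0) (hθz : θ z = -z) : z ∈ a := by
  set s : Set L := insert z a
  have hs : ∀ x ∈ s, ∀ y ∈ s, ⁅x, y⁆ = 0 := by
    have hza := mem_restrictedRootSpace_zero_iff.mp hz
    rintro x (rfl | hx) y (rfl | hy)
    · exact lie_self _
    · rw [← lie_skew, hza y hy, neg_zero]
    · exact hza x hx
    · exact congrArg Subtype.val (trivial_lie_zero a a ⟨x, hx⟩ ⟨y, hy⟩)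
  have hspan : Submodule.span ℝ s ≤ Module.End.eigenspace (θ.toLinearEquiv : L →ₗ[ℝ] L) (-1) := by
    rw [Submodule.span_le]
    rintro x (rfl | hx)
    · simp [hθz]
    · simp [ha_p _ hx]
  have hmax := ha_max (LieSubalgebra.lieSpan ℝ L s)
    (fun x hx ↦ by
      rw [← LieSubalgebra.mem_toSubmodule,
        LieSubalgebra.coe_lieSpan_eq_span_of_forall_lie_eq_zero hs] at hx
      simpa [Module.End.mem_eigenspace_iff] using hspan hx)
    (LieSubalgebra.isLieAbelian_lieSpan_iff.mpr hs)
    (fun x hx ↦ LieSubalgebra.subset_lieSpan (Set.mem_insert_of_mem z hx))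
  exact hmax ▸ LieSubalgebra.subset_lieSpan (Set.mem_insert z _)

lemma restrictedRootSpace_zero_le (θ : L ≃ₗ⁅ℝ⁆ L) (hθinv : ∀ x, θ (θ x) = x)
    (ha_p : ∀ x ∈ a, θ x = -x) (ha_ab : IsLieAbelian a)
    (ha_max : ∀ a' : LieSubalgebra ℝ L,
      (∀ x ∈ a', θ x = -x) → IsLieAbelian a' → a ≤ a' → a' = a)
    (h : LieSubalgebra ℝ L) (hma : ∀ x : L, θ x = x → (∀ y ∈ a, ⁅y, x⁆ = 0) → x ∈ h)
    (hah : a ≤ h) :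
    restrictedRootSpace a 0 ≤ h.toSubmodule := by
  intro x hx
  have hθx : θ x ∈ restrictedRootSpace a 0 := by
    simpa using map_mem_restrictedRootSpace_neg θ ha_p hx
  have hk : (2⁻¹ : ℝ) • (x + θ x) ∈ h :=
    hma _ (by rw [map_smul, map_add, hθinv, add_comm])
      (mem_restrictedRootSpace_zero_iff.mp (Submodule.smul_mem _ _ (add_mem hx hθx)))
  have hp : (2⁻¹ : ℝ) • (x - θ x) ∈ a :=
    mem_of_mem_restrictedRootSpace_zero_of_map_eq_neg θ ha_p ha_ab ha_max
      (Submodule.smul_mem _ _ (sub_mem hx hθx))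
      (by rw [map_smul, map_sub, hθinv, ← smul_neg, neg_sub])
  have hx_eq : x = (2⁻¹ : ℝ) • (x + θ x) + (2⁻¹ : ℝ) • (x - θ x) := by module
  rw [LieSubalgebra.mem_toSubmodule, hx_eq]
  exact add_mem hk (hah hp)

lemma lie_map_self_mem (θ : L ≃ₗ⁅ℝ⁆ L) (hθinv : ∀ x, θ (θ x) = x)
    (ha_p : ∀ x ∈ a, θ x = -x) (ha_ab : IsLieAbelian a)
    (ha_max : ∀ a' : LieSubalgebra ℝ L,
      (∀ x ∈ a', θ x = -x) → IsLieAbelian a' → a ≤ a' → a' = a)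
    {β : Module.Dual ℝ a} {X : L} (hX : X ∈ restrictedRootSpace a β) : ⁅θ X, X⁆ ∈ a := by
  refine mem_of_mem_restrictedRootSpace_zero_of_map_eq_neg θ ha_p ha_ab ha_max ?_ ?_
  · simpa using lie_mem_restrictedRootSpace_add (map_mem_restrictedRootSpace_neg θ ha_p hX) hX
  · rw [θ.map_lie, hθinv, ← lie_skew]

variable [FiniteDimensional ℝ L]

lemma apply_lie_map_self_ne_zero (θ : L ≃ₗ⁅ℝ⁆ L)
    (hθcartan : ∀ x : L, x ≠ 0 → 0 < -(killingForm ℝ L x (θ x)))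
    (ha_p : ∀ x ∈ a, θ x = -x) {β : Module.Dual ℝ a} (hβ : β ≠ 0) {X : L}
    (hX : X ∈ restrictedRootSpace a β) (hX0 : X ≠ 0) (hH₀ : ⁅θ X, X⁆ ∈ a) :
    β ⟨⁅θ X, X⁆, hH₀⟩ ≠ 0 := by
  set H₀ : a := ⟨⁅θ X, X⁆, hH₀⟩
  have hB (H : a) : killingForm ℝ L H H₀ = -β H * killingForm ℝ L (θ X) X :=
    killingForm_lie_of_mem_restrictedRootSpace (map_mem_restrictedRootSpace_neg θ ha_p hX) H X
  have hXθX : killingForm ℝ L (θ X) X ≠ 0 := by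
    rw [LieModule.traceForm_comm]
    exact (neg_pos.mp (hθcartan X hX0)).ne
  have hH₀0 : (H₀ : L) ≠ 0 := by
    intro h0
    refine hβ (LinearMap.ext fun H ↦ ?_)
    simpa [h0, hXθX] using hB H
  intro hβH₀
  simpa [ha_p _ H₀.2, hB, hβH₀] using hθcartan H₀ hH₀0

lemma eq_zero_of_lie_lie_eq_zero (θ : L ≃ₗ⁅ℝ⁆ L) (hθinv : ∀ x, θ (θ x) = x)
    (hθcartan : ∀ x : L, x ≠ 0 → 0 < -(killingForm ℝ L x (θ x)))
    (ha_p : ∀ x ∈ a, θ x = -x) {β : Module.Dual ℝ a} {X : L}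
    (hX : X ∈ restrictedRootSpace a β) (hX0 : X ≠ 0) (hH₀ : ⁅θ X, X⁆ ∈ a)
    (hβH₀ : β ⟨⁅θ X, X⁆, hH₀⟩ ≠ 0) {v : L} (hv : v ∈ restrictedRootSpace a β)
    (hXv : ⁅X, ⁅θ X, v⁆⁆ = 0) : v = 0 := by
  have hθXv : ⁅θ X, v⁆ = 0 := by
    by_contra hu
    simpa [← killingForm_lie_lie_map_eq_neg θ hθinv, hXv] using hθcartan _ hu
  have hθX := mem_restrictedRootSpace_iff.mp (map_mem_restrictedRootSpace_neg θ ha_p hX)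
  rw [mem_restrictedRootSpace_iff] at hX hv
  exact eq_zero_of_lie_eq_smul_of_lie_eq_zero hβH₀ (by simpa using hX0)
    (by simpa using hθX ⟨_, hH₀⟩) (hX ⟨_, hH₀⟩) (hv ⟨_, hH₀⟩) hθXv

lemma restrictedRootSpace_le_of_mem (θ : L ≃ₗ⁅ℝ⁆ L) (hθinv : ∀ x, θ (θ x) = x)
    (hθcartan : ∀ x : L, x ≠ 0 → 0 < -(killingForm ℝ L x (θ x)))
    (ha_p : ∀ x ∈ a, θ x = -x) (ha_ab : IsLieAbelian a)
    (ha_max : ∀ a' : LieSubalgebra ℝ L,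
      (∀ x ∈ a', θ x = -x) → IsLieAbelian a' → a ≤ a' → a' = a)
    (h : LieSubalgebra ℝ L) (hma : ∀ x : L, θ x = x → (∀ y ∈ a, ⁅y, x⁆ = 0) → x ∈ h)
    (hah : a ≤ h) {β : Module.Dual ℝ a} (hβ : β ≠ 0) {X : L}
    (hX : X ∈ restrictedRootSpace a β) (hXh : X ∈ h) (hX0 : X ≠ 0) :
    restrictedRootSpace a β ≤ h.toSubmodule := by
  have hH₀ := lie_map_self_mem θ hθinv ha_p ha_ab ha_max hX
  have hzero {v : L} (hv : v ∈ restrictedRootSpace a β) : ⁅θ X, v⁆ ∈ restrictedRootSpace a 0 := by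
    simpa using lie_mem_restrictedRootSpace_add (map_mem_restrictedRootSpace_neg θ ha_p hX) hv
  let T : restrictedRootSpace a β →ₗ[ℝ] restrictedRootSpace a β :=
    (ad ℝ L X ∘ₗ ad ℝ L (θ X)).restrict fun v hv ↦ by
      simpa using lie_mem_restrictedRootSpace_add hX (hzero hv)
  have hT : Function.Injective T := by
    rw [← LinearMap.ker_eq_bot, LinearMap.ker_eq_bot']
    intro v hv
    exact Subtype.ext <| eq_zero_of_lie_lie_eq_zero θ hθinv hθcartan ha_p hX hX0 hH₀
      (apply_lie_map_self_ne_zero θ hθcartan ha_p hβ hX hX0 hH₀) v.2 (congrArg Subtype.val hv)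
  intro y hy
  obtain ⟨v, hv⟩ := LinearMap.injective_iff_surjective.mp hT ⟨y, hy⟩
  have hyv : ⁅X, ⁅θ X, (v : L)⁆⁆ = y := congrArg Subtype.val hv
  rw [← hyv]
  exact h.lie_mem hXh (restrictedRootSpace_zero_le θ hθinv ha_p ha_ab ha_max h hma hah (hzero v.2))

end CartanInvolution

theorem stmt4_general {L : Type*} [LieRing L] [LieAlgebra ℝ L] [FiniteDimensional ℝ L]
    (θ : L ≃ₗ⁅ℝ⁆ L) (hθinv : ∀ x, θ (θ x) = x)
    (hθcartan : ∀ x : L, x ≠ 0 → 0 < -(killingForm ℝ L x (θ x)))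
    (a : LieSubalgebra ℝ L)
    (ha_p : ∀ x ∈ a, θ x = -x) (ha_ab : IsLieAbelian a)
    (ha_max : ∀ a' : LieSubalgebra ℝ L,
      (∀ x ∈ a', θ x = -x) → IsLieAbelian a' → a ≤ a' → a' = a)
    (h : LieSubalgebra ℝ L)
    (hma : ∀ x : L, θ x = x → (∀ y ∈ a, ⁅y, x⁆ = 0) → x ∈ h)
    (hah : a ≤ h)
    (β : Module.Dual ℝ a) (hβ : β ≠ 0)
    (hnz : restrictedRootSpace a β ⊓ h.toSubmodule ≠ ⊥) :
    LieSubalgebra.lieSpan ℝ L (restrictedRootSpace a β : Set L) ≤ h := by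
  obtain ⟨X, hXmem, hX0⟩ := (Submodule.ne_bot_iff _).mp hnz
  obtain ⟨hX, hXh⟩ := Submodule.mem_inf.mp hXmem
  exact LieSubalgebra.lieSpan_le.mpr <|
    restrictedRootSpace_le_of_mem θ hθinv hθcartan ha_p ha_ab ha_max h hma hah hβ hX hXh hX0

/-- Let `g` be a real semisimple Lie algebra with Cartan involution `θ`, `a` a maximal
abelian subalgebra of the `(−1)`-eigenspace `p` of `θ`, and `h` a Lie subalgebra of `g`
containing `m ⊕ a` (where `m` is the centralizer of `a` in the `(+1)`-eigenspace `k`).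
If `h ∩ g^β ≠ 0` for a restricted root `β`, then the Lie subalgebra generated by the
full restricted root space `g^β` is contained in `h`. -/
theorem stmt4 {L : Type*} [LieRing L] [LieAlgebra ℝ L] [FiniteDimensional ℝ L]
    [LieAlgebra.IsSemisimple ℝ L]
    (θ : L ≃ₗ⁅ℝ⁆ L) (hθinv : ∀ x, θ (θ x) = x)
    (hθcartan : ∀ x : L, x ≠ 0 → 0 < -(killingForm ℝ L x (θ x)))
    (a : LieSubalgebra ℝ L)
    (ha_p : ∀ x ∈ a, θ x = -x) (ha_ab : IsLieAbelian a)
    (ha_max : ∀ a' : LieSubalgebra ℝ L,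
      (∀ x ∈ a', θ x = -x) → IsLieAbelian a' → a ≤ a' → a' = a)
    (h : LieSubalgebra ℝ L)
    (hma : ∀ x : L, θ x = x → (∀ y ∈ a, ⁅y, x⁆ = 0) → x ∈ h)
    (hah : a ≤ h)
    (β : Module.Dual ℝ a) (hβ : β ≠ 0)
    (hnz : restrictedRootSpace a β ⊓ h.toSubmodule ≠ ⊥) :
    LieSubalgebra.lieSpan ℝ L (restrictedRootSpace a β : Set L) ≤ h :=
  stmt4_general θ hθinv hθcartan a ha_p ha_ab ha_max h hma hah β hβ hnz
end

section
/- For the root system C_n (n ≥ 2), the minimal codimension of a maximal parabolic subalgebra of the split Lie algebra sp(2n,ℝ) equals 2n−1; equivalently r(sp(2n,ℝ)) = 2n−1. -/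
/-!
Up to the factor `1/2` when `j` is the last index, the coefficient of `α_j` in a positive root
`v` is the partial sum `∑_{i ≤ j} v i`. For every `j` the roots `2e_k` (`k ≤ j`), `e_j − e_k`
(`k > j`) and `e_j + e_k` (`k ≠ j`) have nonzero partial sum, and they are `n + (n − 1)`
distinct roots, so `r̄(q_j) ≥ 2n − 1`. For the first index a root with nonzero partial sum
must contain `e_1` with coefficient `+1` or `+2`, and these are exactly the roots listed.
-/

open Finset

namespace SymplecticRootSystem

variable {n : ℕ}

-- Written with explicit `if`s, not `Pi.single`, so that the set in `stmt7` is
-- `resonantRoots j` by definition.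
def IsPositiveRoot (v : Fin n → ℤ) : Prop :=
  (∃ a b : Fin n, a < b ∧
      v = fun i => (if i = a then (1 : ℤ) else 0) - (if i = b then 1 else 0)) ∨
    (∃ a b : Fin n, a < b ∧
      v = fun i => (if i = a then (1 : ℤ) else 0) + (if i = b then 1 else 0)) ∨
    ∃ a : Fin n, v = fun i => if i = a then (2 : ℤ) else 0

lemma isPositiveRoot_iff {v : Fin n → ℤ} :
    IsPositiveRoot v ↔
      (∃ a b, a < b ∧ v = Pi.single a 1 - Pi.single b 1) ∨
        (∃ a b, a < b ∧ v = Pi.single a 1 + Pi.single b 1) ∨ ∃ a, v = Pi.single a 2 := by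
  simp only [IsPositiveRoot, funext_iff, Pi.sub_apply, Pi.add_apply, Pi.single_apply]

def partialSum (j : Fin n) (v : Fin n → ℤ) : ℤ :=
  ∑ i ∈ univ.filter (· ≤ j), v i

def resonantRoots (j : Fin n) : Set (Fin n → ℤ) :=
  {v | IsPositiveRoot v ∧ partialSum j v ≠ 0}

@[simp]
lemma partialSum_single (j a : Fin n) (c : ℤ) :
    partialSum j (Pi.single a c) = if a ≤ j then c else 0 := by
  simp [partialSum, Finset.sum_pi_single']

@[simp]
lemma partialSum_add (j : Fin n) (v w : Fin n → ℤ) :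
    partialSum j (v + w) = partialSum j v + partialSum j w :=
  sum_add_distrib

@[simp]
lemma partialSum_sub (j : Fin n) (v w : Fin n → ℤ) :
    partialSum j (v - w) = partialSum j v - partialSum j w :=
  sum_sub_distrib ..

lemma IsPositiveRoot.apply_mem_Icc {v : Fin n → ℤ} (hv : IsPositiveRoot v) (i : Fin n) :
    v i ∈ Set.Icc (-1) 2 := by
  rcases hv with ⟨a, b, -, rfl⟩ | ⟨a, b, -, rfl⟩ | ⟨a, rfl⟩ <;>
    simp only [Set.mem_Icc] <;> split_ifs <;> omega

lemma finite_resonantRoots (j : Fin n) : (resonantRoots j).Finite :=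
  (Set.Finite.pi fun _ => Set.finite_Icc (-1 : ℤ) 2).subset
    fun _ hv => Set.mem_univ_pi.2 hv.1.apply_mem_Icc

def longOrDiffRoot (j k : Fin n) : Fin n → ℤ :=
  if k ≤ j then Pi.single k 2 else Pi.single j 1 - Pi.single k 1

def sumRoot (j k : Fin n) : Fin n → ℤ :=
  Pi.single j 1 + Pi.single k 1

def resonantRoot (j : Fin n) : Fin n ⊕ {k // k ≠ j} → Fin n → ℤ :=
  Sum.elim (longOrDiffRoot j) (fun k => sumRoot j k)

lemma longOrDiffRoot_mem (j k : Fin n) : longOrDiffRoot j k ∈ resonantRoots j := by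
  by_cases hkj : k ≤ j
  · rw [longOrDiffRoot, if_pos hkj]
    exact ⟨isPositiveRoot_iff.2 (.inr (.inr ⟨k, rfl⟩)), by simp [hkj]⟩
  · rw [longOrDiffRoot, if_neg hkj]
    exact ⟨isPositiveRoot_iff.2 (.inl ⟨j, k, not_le.1 hkj, rfl⟩), by simp [hkj]⟩

lemma sumRoot_mem {j k : Fin n} (hk : k ≠ j) : sumRoot j k ∈ resonantRoots j := by
  refine ⟨isPositiveRoot_iff.2 (.inr (.inl ?_)), ?_⟩
  · rcases hk.lt_or_gt with hkj | hjk
    · exact ⟨k, j, hkj, add_comm _ _⟩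
    · exact ⟨j, k, hjk, rfl⟩
  · simp only [sumRoot, partialSum_add, partialSum_single, le_refl, if_true]
    split_ifs <;> omega

lemma longOrDiffRoot_injective (j : Fin n) : Function.Injective (longOrDiffRoot j) := by
  intro k l h
  by_contra hkl
  have hk := congrFun h k
  simp only [longOrDiffRoot, apply_ite (fun v : Fin n → ℤ => v k), Pi.sub_apply,
    Pi.single_apply, if_neg hkl] at hk
  split_ifs at hk <;> simp_all

lemma sumRoot_injective (j : Fin n) : Function.Injective (sumRoot j) := by
  intro k l h
  by_contra hkl
  simpa [Pi.single_apply, hkl] using congrFun (add_left_cancel h) k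

lemma longOrDiffRoot_ne_sumRoot {j : Fin n} (k : Fin n) {l : Fin n} (hl : l ≠ j) :
    longOrDiffRoot j k ≠ sumRoot j l := by
  intro h
  have hl' := congrFun h l
  simp only [longOrDiffRoot, sumRoot, apply_ite (fun v : Fin n → ℤ => v l), Pi.add_apply,
    Pi.sub_apply, Pi.single_apply, if_neg hl] at hl'
  split_ifs at hl' <;> omega

lemma resonantRoot_injective (j : Fin n) : Function.Injective (resonantRoot j) :=
  (longOrDiffRoot_injective j).sumElim ((sumRoot_injective j).comp Subtype.val_injective)
    fun k l => longOrDiffRoot_ne_sumRoot k l.2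

lemma ncard_range_resonantRoot (j : Fin n) :
    (Set.range (resonantRoot j)).ncard = 2 * n - 1 := by
  rw [Set.ncard_range_of_injective (resonantRoot_injective j)]
  simp only [ne_eq, Nat.card_eq_fintype_card, Fintype.card_sum, Fintype.card_fin,
    Fintype.card_subtype_compl, Fintype.card_unique]
  omega

lemma range_resonantRoot_subset (j : Fin n) : Set.range (resonantRoot j) ⊆ resonantRoots j := by
  rintro _ ⟨k | k, rfl⟩
  exacts [longOrDiffRoot_mem j k, sumRoot_mem k.2]

lemma two_mul_sub_one_le_ncard_resonantRoots (j : Fin n) :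
    2 * n - 1 ≤ (resonantRoots j).ncard :=
  ncard_range_resonantRoot j ▸
    Set.ncard_le_ncard (range_resonantRoot_subset j) (finite_resonantRoots j)

lemma resonantRoots_zero [NeZero n] :
    resonantRoots (0 : Fin n) = Set.range (resonantRoot 0) := by
  refine (range_resonantRoot_subset 0).antisymm' ?_
  rintro v ⟨hv, hsum⟩
  have not_le_zero {a b : Fin n} (hab : a < b) : ¬ b ≤ 0 := fun hb =>
    (hab.trans_le hb).not_ge zero_le
  rcases isPositiveRoot_iff.1 hv with ⟨a, b, hab, rfl⟩ | ⟨a, b, hab, rfl⟩ | ⟨a, rfl⟩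
  · obtain rfl : a = 0 := nonpos_iff_eq_zero.1 <| by
      by_contra ha; simp [ha, not_le_zero hab] at hsum
    exact ⟨.inl b, if_neg (not_le_zero hab)⟩
  · obtain rfl : a = 0 := nonpos_iff_eq_zero.1 <| by
      by_contra ha; simp [ha, not_le_zero hab] at hsum
    exact ⟨.inr ⟨b, hab.ne'⟩, rfl⟩
  · obtain rfl : a = 0 := nonpos_iff_eq_zero.1 <| by
      by_contra ha; simp [ha] at hsum
    exact ⟨.inl 0, by simp [resonantRoot, longOrDiffRoot]⟩

lemma ncard_resonantRoots_zero [NeZero n] : (resonantRoots (0 : Fin n)).ncard = 2 * n - 1 := by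
  rw [resonantRoots_zero, ncard_range_resonantRoot]

end SymplecticRootSystem

open SymplecticRootSystem in
/-- Minimal resonant codimension of `sp(2n,ℝ)` (root system `C_n`), `n ≥ 2`.

The positive roots of `C_n` in coordinates `e₁,…,e_n` are `e_a − e_b` and `e_a + e_b`
(`a < b`) and `2e_a`; we realize them as integer vectors `v : Fin n → ℤ`.  For the
maximal parabolic subalgebra `q_j` obtained by omitting the `j`-th simple root from the
standard base (`α_i = e_i − e_{i+1}` for `i < n`, `α_n = 2e_n`), a positive root `v` has
a nonzero coefficient on `α_j` exactly when the partial sum `∑_{i ≤ j} v i` is nonzero.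
The resonant codimension `r̄(q_j)` is the number of such positive roots, and the minimum
over `j` — the minimal codimension of a maximal parabolic subalgebra, i.e.
`r(sp(2n,ℝ))` — equals `2n − 1`. -/
theorem stmt7 (n : ℕ) (hn : 2 ≤ n) :
    sInf {m : ℕ | ∃ j : Fin n,
        m = Set.ncard {v : Fin n → ℤ |
          ((∃ a b : Fin n, a < b ∧
              v = fun i => (if i = a then (1 : ℤ) else 0) - (if i = b then 1 else 0)) ∨
           (∃ a b : Fin n, a < b ∧
              v = fun i => (if i = a then (1 : ℤ) else 0) + (if i = b then 1 else 0)) ∨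
           (∃ a : Fin n, v = fun i => if i = a then (2 : ℤ) else 0)) ∧
          (∑ i ∈ Finset.univ.filter (· ≤ j), v i) ≠ 0}} = 2 * n - 1 := by
  have : NeZero n := ⟨by omega⟩
  change sInf {m : ℕ | ∃ j : Fin n, m = (resonantRoots j).ncard} = 2 * n - 1
  refine IsLeast.csInf_eq ⟨⟨0, ncard_resonantRoots_zero.symm⟩, ?_⟩
  rintro m ⟨j, rfl⟩
  exact two_mul_sub_one_le_ncard_resonantRoots j
end

section
/- Let A ≅ ℝ^k be an abelian group acting measurably on a standard probability space (X,μ) preserving μ, with a bounded measurable linear cocycle A : A × X → GL(d,ℝ). Fix s' ∈ A. Then there exists a linear functional λ : A → ℝ such that λ(t s') = λ₊(t s', μ) for all t ≥ 0, and λ₊(s,μ) ≥ λ(s) for all s ∈ A, where λ₊(s,μ) is the average top Lyapunov exponent of s. -/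
/-!
By the cocycle identity, submultiplicativity of the operator norm and invariance of `μ`, the
average `g a = ∫ log ‖𝒜(a, x)‖ dμ` is subadditive on `A`, and the bounds on `𝒜` make it bounded
on bounded sets. By Fekete's lemma, `λ₊(s) = inf g(n s)/n = lim g(n s)/n` is then subadditive;
it is also positively homogeneous, since `g` changes by a bounded amount between `⌊t⌋ s` and
`t s`. Hahn–Banach, applied to `t s' ↦ t λ₊(s')` on the line through `s'`, gives a linear
functional below `λ₊` that agrees with it on the ray `t ≥ 0`.
-/

open MeasureTheory Filter Topology Set

noncomputable def growthRate {V : Type*} [AddCommGroup V] [Module ℝ V] (g : V → ℝ) (s : V) :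
    ℝ :=
  ⨅ n : ℕ, (1 / (n + 1 : ℝ)) * g (((n : ℝ) + 1) • s)

section SubadditiveFunction

variable {V : Type*} [AddCommGroup V] [Module ℝ V] {g : V → ℝ}
  (hadd : ∀ a b, g (a + b) ≤ g a + g b)
include hadd

theorem subadditive_apply_natCast_smul (s : V) : Subadditive fun n : ℕ => g ((n : ℝ) • s) :=
  fun m n => by simpa only [Nat.cast_add, add_smul] using hadd _ _

theorem bddBelow_range_apply_natCast_smul_div (s : V) :
    BddBelow (range fun n : ℕ => g ((n : ℝ) • s) / n) := by
  refine ⟨min (-g (-s)) 0, ?_⟩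
  rintro _ ⟨n, rfl⟩
  rcases Nat.eq_zero_or_pos n with rfl | hn
  · simp
  have hzero : g 0 ≤ g ((n : ℝ) • s) + g ((n : ℝ) • -s) := by
    simpa only [smul_neg, add_neg_cancel] using hadd ((n : ℝ) • s) ((n : ℝ) • -s)
  -- the `g 0` in this bound cancels the one in `hzero`
  have hneg : g ((n : ℝ) • -s) ≤ n * g (-s) + g 0 := by
    simpa using (subadditive_apply_natCast_smul hadd (-s)).apply_mul_add_le n 1 0
  refine min_le_of_left_le ((le_div_iff₀ (by positivity)).2 ?_)
  linarith

theorem growthRate.tendsto (s : V) :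
    Tendsto (fun n : ℕ => g ((n : ℝ) • s) / n) atTop (𝓝 (growthRate g s)) := by
  have hsub := subadditive_apply_natCast_smul hadd s
  have hbdd := bddBelow_range_apply_natCast_smul_div hadd s
  have hshift : (fun n : ℕ => (1 / (n + 1 : ℝ)) * g (((n : ℝ) + 1) • s)) =
      fun n => g (((n + 1 : ℕ) : ℝ) • s) / ((n + 1 : ℕ) : ℝ) := by
    ext n; push_cast; ring
  suffices growthRate g s = hsub.lim by simpa only [this] using hsub.tendsto_lim hbdd
  rw [growthRate, hshift]
  refine le_antisymm ?_ (le_ciInf fun n => hsub.lim_le_div hbdd n.succ_ne_zero)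
  exact ge_of_tendsto' ((tendsto_add_atTop_iff_nat 1).2 (hsub.tendsto_lim hbdd))
    (ciInf_le (hbdd.mono (range_comp_subset_range (· + 1) fun n : ℕ => g ((n : ℝ) • s) / n)))

theorem growthRate.add_le (a b : V) : growthRate g (a + b) ≤ growthRate g a + growthRate g b := by
  refine le_of_tendsto_of_tendsto' (growthRate.tendsto hadd (a + b))
    ((growthRate.tendsto hadd a).add (growthRate.tendsto hadd b)) fun n => ?_
  rw [smul_add, ← add_div]
  exact div_le_div_of_nonneg_right (hadd _ _) n.cast_nonneg

section LocallyBounded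

variable {s : V} {M : ℝ} (hM : ∀ r : ℝ, |r| ≤ 1 → g (r • s) ≤ M)
include hM

theorem abs_apply_smul_sub_apply_smul_le {a b : ℝ} (hab : |a - b| ≤ 1) :
    |g (a • s) - g (b • s)| ≤ M := by
  have key : ∀ a b : ℝ, |a - b| ≤ 1 → g (a • s) ≤ g (b • s) + M := fun a b hab =>
    calc g (a • s) = g (b • s + (a - b) • s) := by rw [← add_smul, add_sub_cancel]
      _ ≤ g (b • s) + M := (hadd _ _).trans (add_le_add_right (hM _ hab) _)
  have := key b a (by rwa [abs_sub_comm])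
  exact abs_sub_le_iff.2 ⟨by linarith [key a b hab], by linarith⟩

theorem growthRate.tendsto_real :
    Tendsto (fun t : ℝ => g (t • s) / t) atTop (𝓝 (growthRate g s)) := by
  have hfloor : Tendsto (fun t : ℝ => g ((⌊t⌋₊ : ℝ) • s) / ⌊t⌋₊ * (⌊t⌋₊ / t)) atTop
      (𝓝 (growthRate g s * 1)) :=
    ((growthRate.tendsto hadd s).comp tendsto_nat_floor_atTop).mul tendsto_nat_floor_div_atTop
  have herr : Tendsto (fun t : ℝ => (g (t • s) - g ((⌊t⌋₊ : ℝ) • s)) / t) atTop (𝓝 0) := by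
    refine squeeze_zero_norm' ?_ (tendsto_const_nhds (x := M) |>.div_atTop tendsto_id)
    filter_upwards [eventually_gt_atTop 0] with t ht
    rw [Real.norm_eq_abs, abs_div, abs_of_pos ht]
    refine div_le_div_of_nonneg_right (abs_apply_smul_sub_apply_smul_le hadd hM ?_) ht.le
    rw [abs_of_nonneg (sub_nonneg.2 (Nat.floor_le ht.le))]
    linarith [Nat.lt_floor_add_one t]
  rw [mul_one] at hfloor
  refine (hfloor.add herr).congr' ?_ |>.trans (by rw [add_zero])
  filter_upwards [eventually_ge_atTop 1] with t ht
  have hfl : (⌊t⌋₊ : ℝ) ≠ 0 := by simpa using ht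
  field_simp
  ring

theorem growthRate.smul {c : ℝ} (hc : 0 < c) : growthRate g (c • s) = c * growthRate g s := by
  have h := ((growthRate.tendsto_real hadd hM).comp
    (tendsto_natCast_atTop_atTop.atTop_mul_const hc)).const_mul c
  refine tendsto_nhds_unique (growthRate.tendsto hadd (c • s)) (h.congr' ?_)
  filter_upwards [eventually_ne_atTop 0] with n hn
  simp only [Function.comp_apply, smul_smul]
  field_simp

end LocallyBounded

end SubadditiveFunction

theorem exists_linearMap_le_eq_on_ray {V : Type*} [AddCommGroup V] [Module ℝ V] {N : V → ℝ}
    (N_hom : ∀ c : ℝ, 0 < c → ∀ x, N (c • x) = c * N x)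
    (N_add : ∀ x y, N (x + y) ≤ N x + N y) (v : V) :
    ∃ ℓ : V →ₗ[ℝ] ℝ, (∀ t : ℝ, 0 ≤ t → ℓ (t • v) = N (t • v)) ∧ ∀ x, ℓ x ≤ N x := by
  have N_zero : N 0 = 0 := by
    have h := N_hom 2 two_pos 0
    rw [smul_zero] at h
    linarith
  have hray : ∀ t : ℝ, 0 ≤ t → N (t • v) = t * N v := fun t ht => by
    rcases ht.eq_or_lt with rfl | ht
    · simp [N_zero]
    · exact N_hom t ht v
  let f := LinearPMap.mkSpanSingleton' (σ := RingHom.id ℝ) v (N v) fun c hc => by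
    rcases smul_eq_zero.1 hc with rfl | rfl
    · exact zero_smul ℝ _
    · rw [N_zero, smul_zero]
  have hf : ∀ x : f.domain, f x ≤ N x := by
    rintro ⟨_, hx⟩
    obtain ⟨t, rfl⟩ := Submodule.mem_span_singleton.1 hx
    rw [LinearPMap.mkSpanSingleton'_apply, RingHom.id_apply, smul_eq_mul]
    rcases le_or_gt 0 t with ht | ht
    · exact (hray t ht).ge
    -- `N v + N (-v) ≥ N 0 = 0` controls the opposite ray
    have hopp := N_add v (-v)
    rw [add_neg_cancel, N_zero] at hopp
    have : N (t • v) = -t * N (-v) := by rw [← N_hom (-t) (neg_pos.2 ht), neg_smul_neg]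
    rw [this]
    nlinarith
  obtain ⟨ℓ, hℓf, hℓN⟩ := exists_extension_of_le_sublinear f N N_hom N_add hf
  refine ⟨ℓ, fun t ht => ?_, hℓN⟩
  rw [hray t ht]
  exact (hℓf ⟨t • v, Submodule.smul_mem _ t (Submodule.mem_span_singleton_self v)⟩).trans
    (LinearPMap.mkSpanSingleton'_apply _ _ _ t _)

section LogNorm

variable {E F G : Type*} [NormedAddCommGroup E] [NormedSpace ℝ E] [NormedAddCommGroup F]
  [NormedSpace ℝ F] [NormedAddCommGroup G] [NormedSpace ℝ G]

theorem ContinuousLinearEquiv.log_norm_comp_le (e : F ≃L[ℝ] G) (f : E ≃L[ℝ] F) :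
    Real.log ‖(e : F →L[ℝ] G).comp (f : E →L[ℝ] F)‖ ≤
      Real.log ‖(e : F →L[ℝ] G)‖ + Real.log ‖(f : E →L[ℝ] F)‖ := by
  rcases subsingleton_or_nontrivial E with hE | hE
  · have : Subsingleton F := f.symm.toEquiv.subsingleton
    simp [Subsingleton.elim (f : E →L[ℝ] F) 0, Subsingleton.elim (e : F →L[ℝ] G) 0]
  · have : Nontrivial F := f.symm.toEquiv.nontrivial
    rw [← Real.log_mul e.norm_pos.ne' f.norm_pos.ne', ContinuousLinearEquiv.comp_coe]
    have hcomp := (e : F →L[ℝ] G).opNorm_comp_le (f : E →L[ℝ] F)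
    rw [ContinuousLinearEquiv.comp_coe] at hcomp
    exact Real.log_le_log (f.trans e).norm_pos hcomp

theorem ContinuousLinearEquiv.abs_log_norm_le {e : E ≃L[ℝ] F} {C : ℝ}
    (he : ‖(e : E →L[ℝ] F)‖ ≤ C) (he' : ‖(e.symm : F →L[ℝ] E)‖ ≤ C) :
    |Real.log ‖(e : E →L[ℝ] F)‖| ≤ Real.log (max C 1) := by
  rcases subsingleton_or_nontrivial E with hE | hE
  · simpa [Subsingleton.elim (e : E →L[ℝ] F) 0] using Real.log_nonneg (le_max_right C 1)
  have hC : 0 < max C 1 := lt_max_of_lt_right one_pos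
  refine abs_le.2 ⟨?_, Real.log_le_log e.norm_pos (he.trans (le_max_left C 1))⟩
  have : (max C 1)⁻¹ ≤ ‖(e : E →L[ℝ] F)‖ := by
    rw [inv_le_iff_one_le_mul₀' hC]
    calc 1 ≤ ‖(e.symm : F →L[ℝ] E)‖ * ‖(e : E →L[ℝ] F)‖ := by
          rw [mul_comm]; exact e.one_le_norm_mul_norm_symm
      _ ≤ max C 1 * ‖(e : E →L[ℝ] F)‖ := by gcongr; exact he'.trans (le_max_left C 1)
  rw [← Real.log_inv]
  exact Real.log_le_log (inv_pos.2 hC) this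

end LogNorm

section Cocycle

variable {X V E : Type*} [MeasurableSpace X] [NormedAddCommGroup E] [NormedSpace ℝ E]

noncomputable def avgLogNorm (μ : Measure X) (𝒜 : V → X → E ≃L[ℝ] E) (a : V) : ℝ :=
  ∫ x, Real.log ‖(𝒜 a x : E →L[ℝ] E)‖ ∂μ

theorem integrable_log_norm {μ : Measure X} [IsFiniteMeasure μ] {f : X → E ≃L[ℝ] E}
    (hf : Measurable fun x => (f x : E →L[ℝ] E)) {C : ℝ}
    (hC : ∀ x, ‖(f x : E →L[ℝ] E)‖ ≤ C ∧ ‖((f x).symm : E →L[ℝ] E)‖ ≤ C) :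
    Integrable (fun x => Real.log ‖(f x : E →L[ℝ] E)‖) μ :=
  .of_bound (Real.measurable_log.comp hf.norm).aestronglyMeasurable (Real.log (max C 1))
    (ae_of_all _ fun x => (Real.norm_eq_abs _).trans_le
      (ContinuousLinearEquiv.abs_log_norm_le (hC x).1 (hC x).2))

theorem avgLogNorm_le {μ : Measure X} [IsProbabilityMeasure μ] {𝒜 : V → X → E ≃L[ℝ] E}
    {a : V} {C : ℝ}
    (hC : ∀ x, ‖(𝒜 a x : E →L[ℝ] E)‖ ≤ C ∧ ‖((𝒜 a x).symm : E →L[ℝ] E)‖ ≤ C) :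
    avgLogNorm μ 𝒜 a ≤ Real.log (max C 1) := by
  have := norm_integral_le_of_norm_le_const (μ := μ) (ae_of_all _ fun x =>
    (Real.norm_eq_abs _).trans_le (ContinuousLinearEquiv.abs_log_norm_le (hC x).1 (hC x).2))
  rw [probReal_univ, mul_one] at this
  exact (le_abs_self _).trans this

theorem avgLogNorm_add_le [Add V] {μ : Measure X} {T : V → X → X}
    {𝒜 : V → X → E ≃L[ℝ] E}
    (hT : ∀ a, MeasurePreserving (T a) μ μ)
    (hcoc : ∀ a b x, (𝒜 (a + b) x : E →L[ℝ] E) =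
      (𝒜 a (T b x) : E →L[ℝ] E).comp (𝒜 b x : E →L[ℝ] E))
    (hint : ∀ a, Integrable (fun x => Real.log ‖(𝒜 a x : E →L[ℝ] E)‖) μ) (a b : V) :
    avgLogNorm μ 𝒜 (a + b) ≤ avgLogNorm μ 𝒜 a + avgLogNorm μ 𝒜 b := by
  have hshift : ∫ x, Real.log ‖(𝒜 a (T b x) : E →L[ℝ] E)‖ ∂μ = avgLogNorm μ 𝒜 a := by
    rw [← integral_map (f := fun y => Real.log ‖(𝒜 a y : E →L[ℝ] E)‖)
      (hT b).measurable.aemeasurable (by rw [(hT b).map_eq]; exact (hint a).aestronglyMeasurable),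
      (hT b).map_eq, avgLogNorm]
  have hint' : Integrable (fun x => Real.log ‖(𝒜 a (T b x) : E →L[ℝ] E)‖) μ :=
    (hT b).integrable_comp_of_integrable (hint a)
  calc avgLogNorm μ 𝒜 (a + b)
      ≤ ∫ x, (Real.log ‖(𝒜 a (T b x) : E →L[ℝ] E)‖ + Real.log ‖(𝒜 b x : E →L[ℝ] E)‖) ∂μ :=
        integral_mono (hint _) (hint'.add (hint b)) fun x => by
          simpa only [hcoc] using (𝒜 a (T b x)).log_norm_comp_le (𝒜 b x)
    _ = avgLogNorm μ 𝒜 a + avgLogNorm μ 𝒜 b := by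
        rw [integral_add hint' (hint b), hshift]
        rfl

end Cocycle

theorem stmt18_general {X : Type*} [MeasurableSpace X]
    (k d : ℕ)
    (T : (Fin k → ℝ) → X → X)
    (μ : Measure X) [IsProbabilityMeasure μ]
    (hTpres : ∀ a : Fin k → ℝ, MeasurePreserving (T a) μ μ)
    (𝒜 : (Fin k → ℝ) → X → ((Fin d → ℝ) ≃L[ℝ] (Fin d → ℝ)))
    (h𝒜m : Measurable fun q : (Fin k → ℝ) × X =>
      (𝒜 q.1 q.2 : (Fin d → ℝ) →L[ℝ] (Fin d → ℝ)))
    (hcoc : ∀ (a b : Fin k → ℝ) (x : X),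
      (𝒜 (a + b) x : (Fin d → ℝ) →L[ℝ] (Fin d → ℝ)) =
        ((𝒜 a (T b x) : (Fin d → ℝ) →L[ℝ] (Fin d → ℝ))).comp
          (𝒜 b x : (Fin d → ℝ) →L[ℝ] (Fin d → ℝ)))
    (hbdd : ∀ R : ℝ, ∃ C : ℝ, ∀ a : Fin k → ℝ, ‖a‖ ≤ R → ∀ x : X,
      ‖(𝒜 a x : (Fin d → ℝ) →L[ℝ] (Fin d → ℝ))‖ ≤ C ∧
      ‖((𝒜 a x).symm : (Fin d → ℝ) →L[ℝ] (Fin d → ℝ))‖ ≤ C)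
    (s' : Fin k → ℝ) :
    ∃ lam : (Fin k → ℝ) →ₗ[ℝ] ℝ,
      (∀ t : ℝ, 0 ≤ t →
        lam (t • s') =
          ⨅ n : ℕ, (1 / (n + 1 : ℝ)) *
            ∫ x, Real.log
              ‖(𝒜 (((n : ℝ) + 1) • (t • s')) x : (Fin d → ℝ) →L[ℝ] (Fin d → ℝ))‖ ∂μ) ∧
      ∀ s : Fin k → ℝ,
        lam s ≤
          ⨅ n : ℕ, (1 / (n + 1 : ℝ)) *
            ∫ x, Real.log
              ‖(𝒜 (((n : ℝ) + 1) • s) x : (Fin d → ℝ) →L[ℝ] (Fin d → ℝ))‖ ∂μ := by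
  have hint (a : Fin k → ℝ) :
      Integrable (fun x => Real.log ‖(𝒜 a x : (Fin d → ℝ) →L[ℝ] (Fin d → ℝ))‖) μ :=
    have ⟨C, hC⟩ := hbdd ‖a‖
    integrable_log_norm (h𝒜m.comp measurable_prodMk_left) (hC a le_rfl)
  have hadd := avgLogNorm_add_le hTpres hcoc hint
  have hloc (s : Fin k → ℝ) :
      ∃ M, ∀ r : ℝ, |r| ≤ 1 → avgLogNorm μ 𝒜 (r • s) ≤ M := by
    obtain ⟨C, hC⟩ := hbdd ‖s‖
    refine ⟨_, fun r hr => avgLogNorm_le (hC _ ?_)⟩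
    simpa [norm_smul] using mul_le_of_le_one_left (norm_nonneg s) hr
  exact exists_linearMap_le_eq_on_ray
    (fun c hc s => have ⟨_, hM⟩ := hloc s; growthRate.smul hadd hM hc)
    (growthRate.add_le hadd) s'

/-- Higher-rank Lyapunov exponent functional: for a measure-preserving action of
`A ≅ ℝ^k` on a standard probability space with a bounded measurable linear cocycle `𝒜`
and a fixed `s' ∈ A`, there is a linear functional `λ : A → ℝ` with
`λ(t s') = λ₊(t s', μ)` for all `t ≥ 0` and `λ₊(s, μ) ≥ λ(s)` for all `s ∈ A`, where
`λ₊(s,μ) = inf_n (1/n) ∫ log‖𝒜(n·s, x)‖ dμ` is the average top Lyapunov exponent. -/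
theorem stmt18 {X : Type*} [MeasurableSpace X] [StandardBorelSpace X]
    (k d : ℕ)
    (T : (Fin k → ℝ) → X → X)
    (hT0 : T 0 = id) (hTadd : ∀ a b : Fin k → ℝ, T (a + b) = T a ∘ T b)
    (hTjm : Measurable fun q : (Fin k → ℝ) × X => T q.1 q.2)
    (μ : Measure X) [IsProbabilityMeasure μ]
    (hTpres : ∀ a : Fin k → ℝ, MeasurePreserving (T a) μ μ)
    (𝒜 : (Fin k → ℝ) → X → ((Fin d → ℝ) ≃L[ℝ] (Fin d → ℝ)))
    (h𝒜m : Measurable fun q : (Fin k → ℝ) × X =>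
      (𝒜 q.1 q.2 : (Fin d → ℝ) →L[ℝ] (Fin d → ℝ)))
    (hcoc : ∀ (a b : Fin k → ℝ) (x : X),
      (𝒜 (a + b) x : (Fin d → ℝ) →L[ℝ] (Fin d → ℝ)) =
        ((𝒜 a (T b x) : (Fin d → ℝ) →L[ℝ] (Fin d → ℝ))).comp
          (𝒜 b x : (Fin d → ℝ) →L[ℝ] (Fin d → ℝ)))
    (hbdd : ∀ R : ℝ, ∃ C : ℝ, ∀ a : Fin k → ℝ, ‖a‖ ≤ R → ∀ x : X,
      ‖(𝒜 a x : (Fin d → ℝ) →L[ℝ] (Fin d → ℝ))‖ ≤ C ∧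
      ‖((𝒜 a x).symm : (Fin d → ℝ) →L[ℝ] (Fin d → ℝ))‖ ≤ C)
    (s' : Fin k → ℝ) :
    ∃ lam : (Fin k → ℝ) →ₗ[ℝ] ℝ,
      (∀ t : ℝ, 0 ≤ t →
        lam (t • s') =
          ⨅ n : ℕ, (1 / (n + 1 : ℝ)) *
            ∫ x, Real.log
              ‖(𝒜 (((n : ℝ) + 1) • (t • s')) x : (Fin d → ℝ) →L[ℝ] (Fin d → ℝ))‖ ∂μ) ∧
      ∀ s : Fin k → ℝ,
        lam s ≤
          ⨅ n : ℕ, (1 / (n + 1 : ℝ)) *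
            ∫ x, Real.log
              ‖(𝒜 (((n : ℝ) + 1) • s) x : (Fin d → ℝ) →L[ℝ] (Fin d → ℝ))‖ ∂μ :=
  stmt18_general k d T μ hTpres 𝒜 h𝒜m hcoc hbdd s'
end
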